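/- For fixed ε ∈ (0,1) and ρ > 0, the decentralized BEC exponent E_ρ^{(d)}(ε, m) := sup_{λ∈[0,1]} (ρλ·log 2 − m·D(λ‖ε)) is nonincreasing in m and converges to ρ·ε·log 2 as m → ∞. -/

import Mathlib

/-- Binary Kullback–Leibler divergence between `Bernoulli(p)` and `Bernoulli(q)`. -/
noncomputable def binKL (p q : ℝ) : ℝ :=
  p * Real.log (p / q) + (1 - p) * Real.log ((1 - p) / (1 - q))

lemma mul_log_div (x y : ℝ) (hy : y ≠ 0) :
    x * Real.log (x / y) = x * Real.log x - x * Real.log y := by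
  rcases eq_or_ne x 0 with rfl | hx
  · simp
  · rw [Real.log_div hx hy]; ring

lemma binKL_self {ε : ℝ} (hε0 : 0 < ε) (hε1 : ε < 1) : binKL ε ε = 0 := by
  have h1 : (1:ℝ) - ε ≠ 0 := by linarith
  rw [binKL, div_self hε0.ne', div_self h1, Real.log_one]; ring

lemma one_sub_inv_le_log {x : ℝ} (hx : 0 < x) : 1 - x⁻¹ ≤ Real.log x := by
  have := Real.log_le_sub_one_of_pos (inv_pos.2 hx)
  rw [Real.log_inv] at this; linarith

lemma one_sub_inv_lt_log {x : ℝ} (hx : 0 < x) (hx1 : x ≠ 1) : 1 - x⁻¹ < Real.log x := by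
  have := Real.log_lt_sub_one_of_pos (inv_pos.2 hx)
    (fun h => hx1 (by rwa [inv_eq_one] at h))
  rw [Real.log_inv] at this; linarith

lemma binKL_pos {ε l : ℝ} (hε0 : 0 < ε) (hε1 : ε < 1)
    (hl : l ∈ Set.Icc (0:ℝ) 1) (hne : l ≠ ε) : 0 < binKL l ε := by
  obtain ⟨hl0, hl1⟩ := hl
  have h1ε : (0:ℝ) < 1 - ε := by linarith
  rcases eq_or_lt_of_le hl0 with rfl0 | hl0'
  · -- l = 0
    rw [← rfl0, binKL]
    simp only [zero_mul, zero_div, sub_zero, one_mul, zero_add]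
    have : (1:ℝ) < 1 / (1 - ε) := by
      rw [lt_div_iff₀ h1ε]; linarith
    have := Real.log_pos this
    linarith [this]
  rcases eq_or_lt_of_le hl1 with rfl1 | hl1'
  · -- l = 1
    rw [rfl1, binKL]
    simp only [sub_self, zero_mul, add_zero, one_mul]
    have : (1:ℝ) < 1 / ε := by rw [lt_div_iff₀ hε0]; linarith
    have := Real.log_pos this
    linarith
  · have h1l : (0:ℝ) < 1 - l := by linarith
    have ht1 : l - ε < l * Real.log (l / ε) := by
      have hx : 0 < l / ε := div_pos hl0' hε0
      have hx1 : l / ε ≠ 1 := by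
        intro h; exact hne (by field_simp at h; linarith)
      have := one_sub_inv_lt_log hx hx1
      have h2 : l * (1 - (l / ε)⁻¹) < l * Real.log (l / ε) :=
        (mul_lt_mul_iff_right₀ hl0').2 this
      have h3 : l * (1 - (l / ε)⁻¹) = l - ε := by
        field_simp
      linarith
    have ht2 : ε - l ≤ (1 - l) * Real.log ((1 - l) / (1 - ε)) := by
      have hx : 0 < (1 - l) / (1 - ε) := div_pos h1l h1ε
      have := one_sub_inv_le_log hx
      have h2 : (1 - l) * (1 - ((1 - l) / (1 - ε))⁻¹) ≤ (1 - l) * Real.log ((1 - l) / (1 - ε)) :=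
        (mul_le_mul_iff_right₀ h1l).2 this
      have h3 : (1 - l) * (1 - ((1 - l) / (1 - ε))⁻¹) = ε - l := by
        field_simp; ring
      linarith
    rw [binKL]; linarith

lemma binKL_nonneg {ε l : ℝ} (hε0 : 0 < ε) (hε1 : ε < 1)
    (hl : l ∈ Set.Icc (0:ℝ) 1) : 0 ≤ binKL l ε := by
  rcases eq_or_ne l ε with rfl | hne
  · rw [binKL_self hε0 hε1]
  · exact (binKL_pos hε0 hε1 hl hne).le

lemma binKL_continuous {ε : ℝ} (hε0 : 0 < ε) (hε1 : ε < 1) :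
    Continuous fun l : ℝ => binKL l ε := by
  have h1ε : (1:ℝ) - ε ≠ 0 := by linarith
  have heq : (fun l : ℝ => binKL l ε) = fun l =>
      (l * Real.log l - l * Real.log ε) +
      ((1 - l) * Real.log (1 - l) - (1 - l) * Real.log (1 - ε)) := by
    funext l
    rw [binKL, mul_log_div l ε hε0.ne', mul_log_div (1 - l) (1 - ε) h1ε]
  rw [heq]
  have h1 : Continuous fun l : ℝ => l * Real.log l := Real.continuous_mul_log
  have h2 : Continuous fun l : ℝ => (1 - l) * Real.log (1 - l) :=
    h1.comp (continuous_const.sub continuous_id)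
  fun_prop

/-- Decentralized BEC exponent: `E_ρ^{(d)}(ε, m) = sup_{λ∈[0,1]} (ρλ log 2 − m D(λ‖ε))`. -/
noncomputable def decBECExp (ε ρ : ℝ) (m : ℕ) : ℝ :=
  sSup {y : ℝ | ∃ l ∈ Set.Icc (0 : ℝ) 1,
    y = ρ * l * Real.log 2 - (m : ℝ) * binKL l ε}

/-- For fixed `ε ∈ (0,1)` and `ρ > 0`, the decentralized BEC exponent
`E_ρ^{(d)}(ε, m)` is nonincreasing in `m` and converges to `ρ·ε·log 2`
as `m → ∞`. -/
theorem decentralized_bec_exponent_monotone_limit (ε : ℝ)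
    (hε : ε ∈ Set.Ioo (0 : ℝ) 1) (ρ : ℝ) (hρ : 0 < ρ) :
    (∀ m₁ m₂ : ℕ, m₁ ≤ m₂ → decBECExp ε ρ m₂ ≤ decBECExp ε ρ m₁)
    ∧ Filter.Tendsto (fun m : ℕ => decBECExp ε ρ m) Filter.atTop
        (nhds (ρ * ε * Real.log 2)) := by
  obtain ⟨hε0, hε1⟩ := hε
  have hL0 : 0 < Real.log 2 := Real.log_pos one_lt_two
  set S : ℕ → Set ℝ := fun m => {y : ℝ | ∃ l ∈ Set.Icc (0 : ℝ) 1,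
    y = ρ * l * Real.log 2 - (m : ℝ) * binKL l ε} with hS
  have hεIcc : ε ∈ Set.Icc (0:ℝ) 1 := ⟨hε0.le, hε1.le⟩
  have hmem : ∀ m : ℕ, ρ * ε * Real.log 2 ∈ S m := by
    intro m
    exact ⟨ε, hεIcc, by rw [binKL_self hε0 hε1]; ring⟩
  have hne : ∀ m : ℕ, (S m).Nonempty := fun m => ⟨_, hmem m⟩
  have hbdd : ∀ m : ℕ, BddAbove (S m) := by
    intro m
    refine ⟨ρ * Real.log 2, ?_⟩
    rintro y ⟨l, hl, rfl⟩
    have h1 : (m : ℝ) * binKL l ε ≥ 0 :=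
      mul_nonneg (Nat.cast_nonneg m) (binKL_nonneg hε0 hε1 hl)
    have h2 : ρ * l * Real.log 2 ≤ ρ * 1 * Real.log 2 := by
      apply mul_le_mul_of_nonneg_right _ hL0.le
      exact mul_le_mul_of_nonneg_left hl.2 hρ.le
    have : ρ * l * Real.log 2 - (m : ℝ) * binKL l ε ≤ ρ * 1 * Real.log 2 := by linarith
    simpa using this
  have hlow : ∀ m : ℕ, ρ * ε * Real.log 2 ≤ decBECExp ε ρ m :=
    fun m => le_csSup (hbdd m) (hmem m)
  have hmono : ∀ m₁ m₂ : ℕ, m₁ ≤ m₂ → decBECExp ε ρ m₂ ≤ decBECExp ε ρ m₁ := by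
    intro m₁ m₂ h
    apply csSup_le (hne m₂)
    rintro y ⟨l, hl, rfl⟩
    have hD : 0 ≤ binKL l ε := binKL_nonneg hε0 hε1 hl
    have h1 : (m₁ : ℝ) * binKL l ε ≤ (m₂ : ℝ) * binKL l ε :=
      mul_le_mul_of_nonneg_right (by exact_mod_cast h) hD
    calc ρ * l * Real.log 2 - (m₂ : ℝ) * binKL l ε
        ≤ ρ * l * Real.log 2 - (m₁ : ℝ) * binKL l ε := by linarith
      _ ≤ decBECExp ε ρ m₁ := le_csSup (hbdd m₁) ⟨l, hl, rfl⟩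
  refine ⟨hmono, ?_⟩
  rw [tendsto_order]
  constructor
  · intro a ha
    exact Filter.Eventually.of_forall fun m => lt_of_lt_of_le ha (hlow m)
  · intro b hb
    set A := ρ * ε * Real.log 2 with hA
    have hA0 : 0 < A := by positivity
    set δ := b - A with hδ
    have hδ0 : 0 < δ := sub_pos.2 hb
    set η := δ / (2 * ρ * Real.log 2) with hη
    have hη0 : 0 < η := by positivity
    -- bound on the "near ε" region
    have hnear : ∀ m : ℕ, ∀ l ∈ Set.Icc (0:ℝ) 1, |l - ε| < η →
        ρ * l * Real.log 2 - (m : ℝ) * binKL l ε ≤ A + δ / 2 := by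
      intro m l hl hdist
      have hD : 0 ≤ (m : ℝ) * binKL l ε :=
        mul_nonneg (Nat.cast_nonneg m) (binKL_nonneg hε0 hε1 hl)
      have hlε : l ≤ ε + η := by
        have := abs_lt.1 hdist
        linarith [this.2]
      have h1 : ρ * l * Real.log 2 ≤ ρ * (ε + η) * Real.log 2 := by
        apply mul_le_mul_of_nonneg_right _ hL0.le
        exact mul_le_mul_of_nonneg_left hlε hρ.le
      have h2 : ρ * (ε + η) * Real.log 2 = A + δ / 2 := by
        rw [hA, hη]; field_simp
      linarith
    -- the far region
    set K : Set ℝ := Set.Icc (0:ℝ) 1 \ Metric.ball ε η with hK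
    have hKc : IsCompact K := isCompact_Icc.diff Metric.isOpen_ball
    by_cases hKne : K.Nonempty
    · obtain ⟨l₀, hl₀K, hl₀min⟩ := hKc.exists_isMinOn hKne
        ((binKL_continuous hε0 hε1).continuousOn)
      have hl₀ne : l₀ ≠ ε := by
        intro h
        have : l₀ ∈ Metric.ball ε η := by
          simp [Metric.mem_ball, h, hη0]
        exact hl₀K.2 this
      set c := binKL l₀ ε with hc
      have hc0 : 0 < c := binKL_pos hε0 hε1 hl₀K.1 hl₀ne
      obtain ⟨N, hN⟩ := exists_nat_gt (ρ * Real.log 2 / c)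
      have hNc : ρ * Real.log 2 < (N : ℝ) * c := by
        rwa [div_lt_iff₀ hc0] at hN
      rw [Filter.eventually_atTop]
      refine ⟨N, fun m hm => ?_⟩
      have : decBECExp ε ρ m ≤ A + δ / 2 := by
        apply csSup_le (hne m)
        rintro y ⟨l, hl, rfl⟩
        by_cases hball : l ∈ Metric.ball ε η
        · exact hnear m l hl (by simpa [Metric.mem_ball, Real.dist_eq] using hball)
        · have hlK : l ∈ K := ⟨hl, hball⟩
          have hcl : c ≤ binKL l ε := hl₀min hlK
          have hmc : (N : ℝ) * c ≤ (m : ℝ) * binKL l ε := by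
            calc (N : ℝ) * c ≤ (m : ℝ) * c :=
                  mul_le_mul_of_nonneg_right (by exact_mod_cast hm) hc0.le
              _ ≤ (m : ℝ) * binKL l ε :=
                  mul_le_mul_of_nonneg_left hcl (Nat.cast_nonneg m)
          have h1 : ρ * l * Real.log 2 ≤ ρ * Real.log 2 := by
            have := mul_le_mul_of_nonneg_left hl.2 hρ.le
            calc ρ * l * Real.log 2 ≤ ρ * 1 * Real.log 2 :=
                  mul_le_mul_of_nonneg_right this hL0.le
              _ = ρ * Real.log 2 := by ring
          have : ρ * l * Real.log 2 - (m : ℝ) * binKL l ε ≤ 0 := by linarith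
          linarith
      linarith
    · rw [Filter.eventually_atTop]
      refine ⟨0, fun m _ => ?_⟩
      have : decBECExp ε ρ m ≤ A + δ / 2 := by
        apply csSup_le (hne m)
        rintro y ⟨l, hl, rfl⟩
        have hball : l ∈ Metric.ball ε η := by
          by_contra h
          exact hKne ⟨l, hl, h⟩
        exact hnear m l hl (by simpa [Metric.mem_ball, Real.dist_eq] using hball)
      linarith
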